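/- Let G be a finite group, m > 1, x ∈ G \ {e}, and 1 ≤ j ≤ m+1. Define C(x,j) = { x^{-1}_{[i,j)} : 1 ≤ i < j } ∪ { x_{[j,k)} : j < k ≤ m+1 } ⊆ G^m. Then C(x,j) is an m-element clique in the graph G_m(G), and together with the identity e it forms an (m+1)-element clique. -/
import Mathlib


namespace CayleyStmt13

variable {G : Type*}

def intvl [Group G] (m : ℕ) (x : G) (k l : ℕ) : Fin m → G :=
  fun i => if k ≤ i.1 + 1 ∧ i.1 + 1 < l then x else 1

def cS (G : Type*) [Group G] (m : ℕ) : Set (Fin m → G) :=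
  {v | ∃ (x : G) (k l : ℕ), x ≠ 1 ∧ 1 ≤ k ∧ k < l ∧ l ≤ m + 1 ∧ v = intvl m x k l}

def cAdj [Group G] (m : ℕ) (g h : Fin m → G) : Prop := h * g⁻¹ ∈ cS G m

/-- `C(x, j) = { x⁻¹_{[i,j)} : 1 ≤ i < j } ∪ { x_{[j,k)} : j < k ≤ m+1 }`. -/
def cC [Group G] (m : ℕ) (x : G) (j : ℕ) : Set (Fin m → G) :=
  {v | ∃ i : ℕ, 1 ≤ i ∧ i < j ∧ v = intvl m x⁻¹ i j} ∪
  {v | ∃ k : ℕ, j < k ∧ k ≤ m + 1 ∧ v = intvl m x j k}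

section Aux
variable [Group G] {m : ℕ}

lemma L1 (a : G) {i i' jj : ℕ} (h : i ≤ i') (h2 : i' ≤ jj) :
    intvl m a i' jj * (intvl m a i jj)⁻¹ = intvl m a⁻¹ i i' := by
  funext p
  simp only [intvl, Pi.mul_apply, Pi.inv_apply]
  split_ifs <;> first | omega | simp

lemma L1' (a : G) {i i' jj : ℕ} (h : i' ≤ i) (h2 : i ≤ jj) :
    intvl m a i' jj * (intvl m a i jj)⁻¹ = intvl m a i' i := by
  funext p
  simp only [intvl, Pi.mul_apply, Pi.inv_apply]
  split_ifs <;> first | omega | simp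

lemma L2 (a : G) {jj k k' : ℕ} (h : jj ≤ k) (h2 : k ≤ k') :
    intvl m a jj k' * (intvl m a jj k)⁻¹ = intvl m a k k' := by
  funext p
  simp only [intvl, Pi.mul_apply, Pi.inv_apply]
  split_ifs <;> first | omega | simp

lemma L2' (a : G) {jj k k' : ℕ} (h : jj ≤ k') (h2 : k' ≤ k) :
    intvl m a jj k' * (intvl m a jj k)⁻¹ = intvl m a⁻¹ k' k := by
  funext p
  simp only [intvl, Pi.mul_apply, Pi.inv_apply]
  split_ifs <;> first | omega | simp

lemma L3 (a : G) {i jj k : ℕ} (h : i ≤ jj) (h2 : jj ≤ k) :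
    intvl m a jj k * (intvl m a⁻¹ i jj)⁻¹ = intvl m a i k := by
  funext p
  simp only [intvl, Pi.mul_apply, Pi.inv_apply]
  split_ifs <;> first | omega | simp

lemma L4 (a : G) {i jj k : ℕ} (h : i ≤ jj) (h2 : jj ≤ k) :
    intvl m a⁻¹ i jj * (intvl m a jj k)⁻¹ = intvl m a⁻¹ i k := by
  funext p
  simp only [intvl, Pi.mul_apply, Pi.inv_apply]
  split_ifs <;> first | omega | simp

lemma L5 (a : G) (k l : ℕ) : (intvl m a k l)⁻¹ = intvl m a⁻¹ k l := by
  funext p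
  simp only [intvl, Pi.inv_apply]
  split_ifs <;> simp

/-- Enumeration of `C(x,j)` by `t ∈ {1, …, m}`. -/
def fC (m : ℕ) (x : G) (j t : ℕ) : Fin m → G :=
  if t < j then intvl m x⁻¹ t j else intvl m x j (t + 1)

lemma fC_ne_one {x : G} (hx : x ≠ 1) {j t : ℕ} (hj : 1 ≤ j) (ht1 : 1 ≤ t)
    (htm : t ≤ m) : fC m x j t ≠ 1 := by
  intro heq
  by_cases h : t < j
  · rw [fC, if_pos h] at heq
    have h2 := congrFun heq ⟨t - 1, by omega⟩
    simp only [intvl, Pi.one_apply] at h2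
    rw [if_pos (by constructor <;> omega)] at h2
    exact hx (inv_eq_one.mp h2)
  · rw [fC, if_neg h] at heq
    have h2 := congrFun heq ⟨j - 1, by omega⟩
    simp only [intvl, Pi.one_apply] at h2
    rw [if_pos (by constructor <;> omega)] at h2
    exact hx h2

lemma fC_ne {x : G} (hx : x ≠ 1) {j t t' : ℕ} (ht1 : 1 ≤ t) (htt : t < t')
    (htm : t' ≤ m) : fC m x j t ≠ fC m x j t' := by
  intro heq
  by_cases h : t < j
  · rw [fC, if_pos h] at heq
    by_cases h' : t' < j
    · rw [fC, if_pos h'] at heq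
      have h2 := congrFun heq ⟨t - 1, by omega⟩
      simp only [intvl] at h2
      rw [if_pos (by constructor <;> omega), if_neg (by omega)] at h2
      exact hx (inv_eq_one.mp h2)
    · rw [fC, if_neg h'] at heq
      have h2 := congrFun heq ⟨t - 1, by omega⟩
      simp only [intvl] at h2
      rw [if_pos (by constructor <;> omega), if_neg (by omega)] at h2
      exact hx (inv_eq_one.mp h2)
  · rw [fC, if_neg h, fC, if_neg (by omega)] at heq
    have h2 := congrFun heq ⟨t, by omega⟩
    simp only [intvl] at h2
    rw [if_neg (by omega), if_pos (by constructor <;> omega)] at h2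
    exact hx h2.symm

lemma cC_eq (x : G) {j : ℕ} (hj1 : 1 ≤ j) (hjm : j ≤ m + 1) :
    cC m x j = fC m x j '' Set.Icc 1 m := by
  ext v
  constructor
  · rintro (⟨i, h1, h2, rfl⟩ | ⟨k, h1, h2, rfl⟩)
    · exact ⟨i, ⟨h1, by omega⟩, by rw [fC, if_pos h2]⟩
    · refine ⟨k - 1, ⟨by omega, by omega⟩, ?_⟩
      have hk : k - 1 + 1 = k := by omega
      rw [fC, if_neg (by omega), hk]
  · rintro ⟨t, ⟨h1, h2⟩, rfl⟩
    by_cases h : t < j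
    · exact Or.inl ⟨t, h1, h, by rw [fC, if_pos h]⟩
    · exact Or.inr ⟨t + 1, by omega, by omega, by rw [fC, if_neg h]⟩

end Aux

/-- `C(x, j)` is an `m`-element clique of `Cay(G^m, S)`, and adding the
identity gives an `(m+1)`-element clique. -/
theorem C_is_clique [Group G] [Fintype G] (m : ℕ) (hm : 1 < m)
    (x : G) (hx : x ≠ 1) (j : ℕ) (hj1 : 1 ≤ j) (hjm : j ≤ m + 1) :
    (cC m x j).Pairwise (cAdj m) ∧ (cC m x j).ncard = m ∧
    (insert (1 : Fin m → G) (cC m x j)).Pairwise (cAdj m) ∧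
    (insert (1 : Fin m → G) (cC m x j)).ncard = m + 1 := by
  have hxi : x⁻¹ ≠ 1 := inv_ne_one.mpr hx
  have hpair : (cC m x j).Pairwise (cAdj m) := by
    rintro a (⟨i, hi1, hij, rfl⟩ | ⟨k, hjk, hkm, rfl⟩)
      b (⟨i', hi1', hij', rfl⟩ | ⟨k', hjk', hkm', rfl⟩) hab
    · rcases lt_trichotomy i i' with h | h | h
      · exact ⟨x, i, i', hx, hi1, h, by omega, by rw [L1 x⁻¹ h.le hij'.le, inv_inv]⟩
      · exact absurd (by rw [h]) hab
      · exact ⟨x⁻¹, i', i, hxi, hi1', h, by omega, L1' x⁻¹ h.le hij.le⟩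
    · exact ⟨x, i, k', hx, hi1, by omega, hkm', L3 x hij.le hjk'.le⟩
    · exact ⟨x⁻¹, i', k, hxi, hi1', by omega, hkm, L4 x hij'.le hjk.le⟩
    · rcases lt_trichotomy k k' with h | h | h
      · exact ⟨x, k, k', hx, by omega, h, hkm', L2 x hjk.le h.le⟩
      · exact absurd (by rw [h]) hab
      · exact ⟨x⁻¹, k', k, hxi, by omega, h, hkm, L2' x hjk'.le h.le⟩
  have hpair' : (insert (1 : Fin m → G) (cC m x j)).Pairwise (cAdj m) := by
    rintro a (rfl | ha) b (rfl | hb) hab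
    · exact absurd rfl hab
    · show b * (1 : Fin m → G)⁻¹ ∈ cS G m
      rw [inv_one, mul_one]
      rcases hb with ⟨i, h1, h2, rfl⟩ | ⟨k, h1, h2, rfl⟩
      · exact ⟨x⁻¹, i, j, hxi, h1, h2, hjm, rfl⟩
      · exact ⟨x, j, k, hx, hj1, h1, h2, rfl⟩
    · show (1 : Fin m → G) * a⁻¹ ∈ cS G m
      rw [one_mul]
      rcases ha with ⟨i, h1, h2, rfl⟩ | ⟨k, h1, h2, rfl⟩
      · exact ⟨x, i, j, hx, h1, h2, hjm, by rw [L5, inv_inv]⟩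
      · exact ⟨x⁻¹, j, k, hxi, hj1, h1, h2, L5 x j k⟩
    · exact hpair ha hb hab
  have himg := cC_eq x hj1 hjm
  have hinj : Set.InjOn (fC m x j) (Set.Icc 1 m) := by
    intro t ht t' ht' heq
    by_contra hne
    rcases lt_or_gt_of_ne hne with h | h
    · exact fC_ne hx ht.1 h ht'.2 heq
    · exact fC_ne hx ht'.1 h ht.2 heq.symm
  have h1 : (cC m x j).ncard = m := by
    rw [himg, Set.ncard_image_of_injOn hinj, ← Finset.coe_Icc,
      Set.ncard_coe_finset, Nat.card_Icc]
    omega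
  have hnot : (1 : Fin m → G) ∉ cC m x j := by
    rw [himg]
    rintro ⟨t, ⟨ht1, ht2⟩, heq⟩
    exact fC_ne_one hx hj1 ht1 ht2 heq
  have h2 : (insert (1 : Fin m → G) (cC m x j)).ncard = m + 1 := by
    rw [Set.ncard_insert_of_notMem hnot (Set.toFinite _), h1]
  exact ⟨hpair, h1, hpair', h2⟩

end CayleyStmt13
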